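/- arXiv:1603.04492 — 2 statements merged into one kernel-verified Lean document; each statement's English description precedes it below -/
import Mathlib

section
/- Let X ⊂ ℝ^n, p ∈ X, and suppose there exists s > 0 such that c := inf{ H^m(X ∩ B(q,r))/r^m : q ∈ X, B(q,r) ⊆ B(p,s) } > 0. If E is an approximate tangent m-plane for X at p, then for every 0 < ε < 1 there exists r > 0 such that X ∩ B(p,r) ⊆ closure of the cone C(p,E,ε) := { q ∈ ℝ^n : dist(q − p, E) < ε·|q − p| }. -/
open Metric Filter Set MeasureTheory

/-- The open cone `C(p,E,ε) = { q : dist(q-p,E) < ε |q-p| }` about the affine plane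
through `p` with direction the linear subspace `E`. -/
def tangentCone' {n : ℕ} (p : EuclideanSpace ℝ (Fin n))
    (E : Submodule ℝ (EuclideanSpace ℝ (Fin n))) (ε : ℝ) :
    Set (EuclideanSpace ℝ (Fin n)) :=
  {q | Metric.infDist (q - p) (E : Set (EuclideanSpace ℝ (Fin n))) < ε * ‖q - p‖}

/-!
If a point `q` of `X` close to `p` lies outside the closed `ε`-cone, then, with `d = |q - p|`,
the ball `B(q, εd/4)` misses the `ε/2`-cone and lies in `B(p, 2d)`. The lower density bound
gives it mass at least `c (εd/4)^m = c (ε/8)^m (2d)^m`, which approximate tangency forbids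
for the part of `X ∩ B(p, 2d)` outside the `ε/2`-cone once `d` is small. The vertex `p` lies in
the closure of every cone with `E ≠ 0`; for `E = 0` the cones are empty and the same comparison
for `B(p, r)` itself is contradictory.
-/

section TangentCone

variable {n : ℕ} {p : EuclideanSpace ℝ (Fin n)} {E : Submodule ℝ (EuclideanSpace ℝ (Fin n))}
  {ε : ℝ}

theorem tangentCone'_bot (hε : ε ≤ 1) : tangentCone' p ⊥ ε = ∅ := by
  ext q
  simp only [tangentCone', mem_ofPred_eq, Submodule.bot_coe, infDist_singleton,
    dist_zero_right, mem_empty_iff_false, iff_false, not_lt]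
  nlinarith [norm_nonneg (q - p)]

theorem self_mem_closure_tangentCone' (hE : E ≠ ⊥) (hε : 0 < ε) :
    p ∈ closure (tangentCone' p E ε) := by
  obtain ⟨e, heE, he⟩ := (Submodule.ne_bot_iff E).mp hE
  have hlim : Tendsto (fun t : ℝ => p + t • e) (nhdsWithin 0 (Ioi 0)) (nhds p) := by
    have h0 : Tendsto (fun t : ℝ => t) (nhdsWithin 0 (Ioi 0)) (nhds 0) := nhdsWithin_le_nhds
    simpa using (h0.smul_const e).const_add p
  refine mem_closure_of_tendsto hlim (eventually_nhdsWithin_of_forall fun t (ht : 0 < t) => ?_)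
  simp only [tangentCone', mem_ofPred_eq, add_sub_cancel_left,
    infDist_zero_of_mem (E.smul_mem t heE), norm_smul, Real.norm_of_nonneg ht.le]
  positivity

theorem closedBall_subset_sdiff_tangentCone' {q : EuclideanSpace ℝ (Fin n)} (hε : 0 ≤ ε)
    (hε1 : ε ≤ 1) (hq : ε * ‖q - p‖ ≤ infDist (q - p) E) :
    closedBall q (ε / 4 * ‖q - p‖) ⊆ closedBall p (2 * ‖q - p‖) \ tangentCone' p E (ε / 2) := by
  set d := ‖q - p‖
  have hd : 0 ≤ d := norm_nonneg _
  intro x hx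
  have hxq : dist x q ≤ ε / 4 * d := hx
  have hxp : ‖x - p‖ ≤ d + ε / 4 * d := by
    rw [← dist_eq_norm]
    exact (dist_triangle x q p).trans (by rw [dist_eq_norm q p]; linarith)
  have hinf : infDist (q - p) E ≤ infDist (x - p) E + dist x q := by
    simpa [dist_comm x q] using infDist_le_infDist_add_dist (x := q - p) (y := x - p) (s := E)
  refine ⟨by rw [mem_closedBall, dist_eq_norm]; nlinarith, fun hxC => ?_⟩
  have hxC' : infDist (x - p) E < ε / 2 * ‖x - p‖ := hxC
  have hxp' : ε / 2 * ‖x - p‖ ≤ 3 / 4 * (ε * d) := by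
    nlinarith [mul_le_mul_of_nonneg_left hxp (by positivity : 0 ≤ ε / 2), mul_nonneg hε hd]
  linarith

end TangentCone

theorem not_closedBall_subset_sdiff_of_measureReal_lt {α : Type*} [PseudoMetricSpace α]
    [MeasurableSpace α] {μ : Measure α} {X K : Set α} {p q : α} {m : ℕ} {c κ ρ R : ℝ}
    (hc : 0 ≤ c) (hκR : 0 ≤ κ * R) (hρ : κ * R ≤ ρ)
    (hlower : c * ρ ^ m ≤ μ.real (X ∩ closedBall q ρ))
    (hupper : μ.real ((X ∩ closedBall p R) \ K) < c * κ ^ m * R ^ m)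
    (hfin : μ (X ∩ closedBall p R) ≠ ⊤) :
    ¬ closedBall q ρ ⊆ closedBall p R \ K := by
  intro hball
  have hmono : μ.real (X ∩ closedBall q ρ) ≤ μ.real ((X ∩ closedBall p R) \ K) :=
    measureReal_mono (fun x ⟨hxX, hx⟩ => ⟨⟨hxX, (hball hx).1⟩, (hball hx).2⟩)
      (ne_top_of_le_ne_top hfin (measure_mono sdiff_subset))
  have hscale : c * κ ^ m * R ^ m ≤ c * ρ ^ m := by
    rw [mul_assoc, ← mul_pow]
    gcongr
  exact (hscale.trans (hlower.trans hmono)).not_gt hupper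

theorem approx_tangent_cone_containment_general
    (n m : ℕ) (X : Set (EuclideanSpace ℝ (Fin n))) (p : EuclideanSpace ℝ (Fin n))
    (hp : p ∈ X)
    (E : Submodule ℝ (EuclideanSpace ℝ (Fin n)))
    -- lower density bound: the infimum of density ratios over balls inside B(p,s) is positive
    (hinf : ∃ s > (0:ℝ), ∃ c > (0:ℝ), ∀ q ∈ X, ∀ r > (0:ℝ),
      closedBall q r ⊆ closedBall p s →
        c ≤ (μH[m] (X ∩ closedBall q r)).toReal / r ^ m)
    -- E is an approximate tangent m-plane for X at p
    (htan : ∀ ε > (0:ℝ),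
      Tendsto (fun r => (μH[m] ((X ∩ closedBall p r) \ tangentCone' p E ε)).toReal / r ^ m)
        (nhdsWithin 0 (Ioi 0)) (nhds 0)) :
    ∀ ε : ℝ, 0 < ε → ε < 1 →
      ∃ r > (0:ℝ), X ∩ closedBall p r ⊆ closure (tangentCone' p E ε) := by
  obtain ⟨s, hs, c, hc, hdens⟩ := hinf
  have hlower : ∀ q ∈ X, ∀ r > 0, closedBall q r ⊆ closedBall p s →
      c * r ^ m ≤ μH[m].real (X ∩ closedBall q r) :=
    fun q hq r hr hqr => (le_div_iff₀ (by positivity)).mp (hdens q hq r hr hqr)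
  intro ε hε hε1
  obtain ⟨r₁, hr₁, hsmall⟩ := (nhdsGT_basis (0 : ℝ)).eventually_iff.mp
    ((htan (ε / 2) (by positivity)).eventually_lt_const (by positivity : 0 < c * (ε / 8) ^ m))
  have key : ∀ q ∈ X, ∀ ρ R : ℝ, 0 < ρ → 0 < R → ε / 8 * R ≤ ρ → R < r₁ → R ≤ s →
      ¬ closedBall q ρ ⊆ closedBall p R \ tangentCone' p E (ε / 2) := by
    intro q hq ρ R hρ hR hρR hRr₁ hRs hball
    have hpR := hlower p hp R hR (closedBall_subset_closedBall hRs)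
    refine not_closedBall_subset_sdiff_of_measureReal_lt hc.le (by positivity) hρR
      (hlower q hq ρ hρ ((hball.trans sdiff_subset).trans (closedBall_subset_closedBall hRs)))
      ((div_lt_iff₀ (by positivity)).mp (hsmall ⟨hR, hRr₁⟩))
      (ENNReal.toReal_pos_iff.mp (hpR.trans_lt' (by positivity))).2.ne hball
  set r := min (r₁ / 4) (s / 2)
  have hr : 0 < r := by positivity
  have hrr₁ : r ≤ r₁ / 4 := min_le_left _ _
  have hrs : r ≤ s / 2 := min_le_right _ _
  refine ⟨r, hr, fun q hq => ?_⟩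
  by_cases hE : E = ⊥
  · subst hE
    refine (key p hp r r hr hr (by nlinarith) (by linarith) (by linarith) ?_).elim
    rw [tangentCone'_bot (by linarith), sdiff_empty]
  by_cases hqp : q = p
  · exact hqp ▸ self_mem_closure_tangentCone' hE hε
  by_contra hqC
  have hd : 0 < ‖q - p‖ := norm_pos_iff.mpr (sub_ne_zero.mpr hqp)
  have hdr : ‖q - p‖ ≤ r := by rw [← dist_eq_norm]; exact hq.2
  exact key q hq.1 _ _ (by positivity) (by positivity) (by linarith) (by linarith) (by linarith)
    (closedBall_subset_sdiff_tangentCone' hε.le hε1.le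
      (not_lt.mp fun h => hqC (subset_closure h)))

theorem approx_tangent_cone_containment
    (n m : ℕ) (X : Set (EuclideanSpace ℝ (Fin n))) (p : EuclideanSpace ℝ (Fin n))
    (hp : p ∈ X)
    (E : Submodule ℝ (EuclideanSpace ℝ (Fin n))) (hE : Module.finrank ℝ E = m)
    -- lower density bound: the infimum of density ratios over balls inside B(p,s) is positive
    (hinf : ∃ s > (0:ℝ), ∃ c > (0:ℝ), ∀ q ∈ X, ∀ r > (0:ℝ),
      closedBall q r ⊆ closedBall p s →
        c ≤ (μH[m] (X ∩ closedBall q r)).toReal / r ^ m)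
    -- E is an approximate tangent m-plane for X at p
    (htan : ∀ ε > (0:ℝ),
      Tendsto (fun r => (μH[m] ((X ∩ closedBall p r) \ tangentCone' p E ε)).toReal / r ^ m)
        (nhdsWithin 0 (Ioi 0)) (nhds 0)) :
    ∀ ε : ℝ, 0 < ε → ε < 1 →
      ∃ r > (0:ℝ), X ∩ closedBall p r ⊆ closure (tangentCone' p E ε) :=
  approx_tangent_cone_containment_general n m X p hp E hinf htan
end

section
/- Let μ_0 be a finite Borel measure on ℝ^n, p ∈ supp(μ_0), 0 < ε < 1/2, and suppose there are constants a, C_m > 0 and d > 0 such that μ_0(A(p,ε,s)) ≥ a C_m ε s^m for all s ∈ (0,d), where A(p,ε,s) = B(p,s) \ open ball of radius (1−ε)s. Then for any r ∈ (0,d) with μ_0(∂A(p,ε,r_i)) = 0 for all i (r_i = (1−ε)^i r), one has μ_0(B(p,r)) ≥ a C_m (ε/(1 − (1−ε)^m)) r^m. In particular, since ε/(1−(1−ε)^m) ≥ 1/m, μ_0(B(p,r)) ≥ (a C_m/m) r^m. -/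
open Metric Filter Set MeasureTheory

/-- The support of a measure. -/
def msupport {n : ℕ} (μ : Measure (EuclideanSpace ℝ (Fin n))) :
    Set (EuclideanSpace ℝ (Fin n)) :=
  {x | ∀ r > (0:ℝ), 0 < μ (ball x r)}

/-- The closed annulus `A(p,ε,s) = B(p,s) \ N(p,(1-ε)s)`. -/
def annulus {n : ℕ} (p : EuclideanSpace ℝ (Fin n)) (ε s : ℝ) :
    Set (EuclideanSpace ℝ (Fin n)) :=
  closedBall p s \ ball p ((1 - ε) * s)

theorem annulus_mass_lower_bound
    (n m : ℕ) (hm : 1 ≤ m) (μ₀ : Measure (EuclideanSpace ℝ (Fin n))) [IsFiniteMeasure μ₀]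
    (p : EuclideanSpace ℝ (Fin n)) (hp : p ∈ msupport μ₀)
    (ε : ℝ) (hε0 : 0 < ε) (hε : ε < 1 / 2)
    (a Cm d : ℝ) (ha : 0 < a) (hCm : 0 < Cm) (hd : 0 < d)
    (hann : ∀ s : ℝ, 0 < s → s < d →
      ENNReal.ofReal (a * Cm * ε * s ^ m) ≤ μ₀ (annulus p ε s))
    (r : ℝ) (hr0 : 0 < r) (hrd : r < d)
    (hbdry : ∀ i : ℕ, μ₀ (frontier (annulus p ε ((1 - ε) ^ i * r))) = 0) :
    ENNReal.ofReal (a * Cm * (ε / (1 - (1 - ε) ^ m)) * r ^ m) ≤ μ₀ (closedBall p r) ∧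
    ENNReal.ofReal (a * Cm / m * r ^ m) ≤ μ₀ (closedBall p r) := by
  have h1ε : 0 < 1 - ε := by linarith
  have h1ε1 : 1 - ε < 1 := by linarith
  set q : ℝ := (1 - ε) ^ m with hqdef
  have hq1 : q < 1 := pow_lt_one₀ h1ε.le h1ε1 (by omega)
  have hq0 : 0 ≤ q := pow_nonneg h1ε.le m
  have h1q : 0 < 1 - q := by linarith
  set ri : ℕ → ℝ := fun i => (1 - ε) ^ i * r with hridef
  have hri0 : ∀ i, 0 < ri i := fun i => mul_pos (pow_pos h1ε i) hr0
  have hrile : ∀ i, ri i ≤ r := by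
    intro i
    have : (1 - ε) ^ i ≤ 1 := pow_le_one₀ h1ε.le h1ε1.le
    calc ri i = (1 - ε) ^ i * r := rfl
      _ ≤ 1 * r := by nlinarith
      _ = r := one_mul r
  have hrid : ∀ i, ri i < d := fun i => lt_of_le_of_lt (hrile i) hrd
  have hri_succ : ∀ i, ri (i + 1) = (1 - ε) * ri i := by
    intro i; simp only [hridef, pow_succ]; ring
  have hri_anti : ∀ i j : ℕ, i ≤ j → ri j ≤ ri i := by
    intro i j hij
    have : (1 - ε) ^ j ≤ (1 - ε) ^ i := pow_le_pow_of_le_one h1ε.le h1ε1.le hij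
    have := hr0
    calc ri j = (1 - ε) ^ j * r := rfl
      _ ≤ (1 - ε) ^ i * r := by nlinarith
  -- spheres have measure zero
  have hsph : ∀ i, μ₀ (sphere p (ri i)) = 0 := by
    intro i
    refine measure_mono_null ?_ (hbdry i)
    have hrw : (1 - ε) ^ i * r = ri i := rfl
    rw [hrw]
    intro x hx
    rw [frontier_eq_closure_inter_closure]
    have hkey : (1 - ε) * ri i < ri i := by nlinarith [hri0 i]
    rw [mem_sphere] at hx
    constructor
    · apply subset_closure
      refine ⟨le_of_eq hx, ?_⟩
      rw [mem_ball, not_lt, hx]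
      linarith
    · have hx2 : x ∈ closure (closedBall p (ri i))
          ∩ closure ((closedBall p (ri i))ᶜ) := by
        rw [← frontier_eq_closure_inter_closure, frontier_closedBall p (hri0 i).ne']
        exact hx
      refine closure_mono ?_ hx2.2
      intro y hy hy2
      exact hy hy2.1
  -- disjoint half-open annuli
  set D : ℕ → Set (EuclideanSpace ℝ (Fin n)) :=
    fun i => closedBall p (ri i) \ closedBall p (ri (i + 1)) with hDdef
  have hDm : ∀ i, MeasurableSet (D i) :=
    fun i => measurableSet_closedBall.diff measurableSet_closedBall
  have hDkey : ∀ i j : ℕ, i < j → Disjoint (D i) (D j) := by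
    intro i j hlt
    rw [Set.disjoint_left]
    intro x hxi hxj
    have h1 : x ∉ closedBall p (ri (i + 1)) := hxi.2
    have h2 : x ∈ closedBall p (ri j) := hxj.1
    exact h1 (closedBall_subset_closedBall (hri_anti _ _ (by omega)) h2)
  have hDdisj : Pairwise (Function.onFun Disjoint D) := by
    intro i j hij
    rcases hij.lt_or_gt with h | h
    · exact hDkey _ _ h
    · exact (hDkey _ _ h).symm
  -- lower bound for each D i
  have hDlb : ∀ i, ENNReal.ofReal (a * Cm * ε * r ^ m * q ^ i) ≤ μ₀ (D i) := by
    intro i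
    have hsub : annulus p ε (ri i) ⊆ D i ∪ sphere p (ri (i + 1)) := by
      intro x hx
      obtain ⟨hx1, hx2⟩ := hx
      rw [← hri_succ i] at hx2
      by_cases h : x ∈ closedBall p (ri (i + 1))
      · right
        rw [mem_sphere]
        rw [mem_closedBall] at h
        rw [mem_ball, not_lt] at hx2
        exact le_antisymm h hx2
      · exact Or.inl ⟨hx1, h⟩
    have hle : μ₀ (annulus p ε (ri i)) ≤ μ₀ (D i) := by
      calc μ₀ (annulus p ε (ri i)) ≤ μ₀ (D i ∪ sphere p (ri (i + 1))) := measure_mono hsub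
        _ ≤ μ₀ (D i) + μ₀ (sphere p (ri (i + 1))) := measure_union_le _ _
        _ = μ₀ (D i) := by rw [hsph (i + 1), add_zero]
    have heq : a * Cm * ε * (ri i) ^ m = a * Cm * ε * r ^ m * q ^ i := by
      simp only [hridef, hqdef, mul_pow, ← pow_mul]
      ring_nf
    calc ENNReal.ofReal (a * Cm * ε * r ^ m * q ^ i)
        = ENNReal.ofReal (a * Cm * ε * (ri i) ^ m) := by rw [heq]
      _ ≤ μ₀ (annulus p ε (ri i)) := hann _ (hri0 i) (hrid i)
      _ ≤ μ₀ (D i) := hle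
  -- sum up
  have hc0 : 0 < a * Cm * ε * r ^ m := by positivity
  have hsummable : Summable (fun i : ℕ => a * Cm * ε * r ^ m * q ^ i) :=
    (summable_geometric_of_lt_one hq0 hq1).mul_left _
  have htsum : ∑' i : ℕ, (a * Cm * ε * r ^ m * q ^ i)
      = a * Cm * (ε / (1 - q)) * r ^ m := by
    rw [tsum_mul_left, tsum_geometric_of_lt_one hq0 hq1]
    field_simp
  have hmain : ENNReal.ofReal (a * Cm * (ε / (1 - q)) * r ^ m) ≤ μ₀ (closedBall p r) := by
    calc ENNReal.ofReal (a * Cm * (ε / (1 - q)) * r ^ m)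
        = ENNReal.ofReal (∑' i : ℕ, (a * Cm * ε * r ^ m * q ^ i)) := by rw [htsum]
      _ = ∑' i : ℕ, ENNReal.ofReal (a * Cm * ε * r ^ m * q ^ i) :=
          ENNReal.ofReal_tsum_of_nonneg (fun i => by positivity) hsummable
      _ ≤ ∑' i : ℕ, μ₀ (D i) := ENNReal.tsum_le_tsum hDlb
      _ = μ₀ (⋃ i, D i) := (measure_iUnion hDdisj hDm).symm
      _ ≤ μ₀ (closedBall p r) :=
          measure_mono (iUnion_subset fun i =>
            diff_subset.trans (closedBall_subset_closedBall (hrile i)))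
  refine ⟨hmain, le_trans ?_ hmain⟩
  apply ENNReal.ofReal_le_ofReal
  have hm0 : (0:ℝ) < m := by exact_mod_cast hm
  have hbern : 1 + (m:ℝ) * (-ε) ≤ (1 + (-ε)) ^ m := one_add_mul_le_pow (by linarith) m
  have h1qm : 1 - q ≤ m * ε := by
    simp only [hqdef]
    have : (1:ℝ) + (-ε) = 1 - ε := by ring
    rw [this] at hbern
    linarith
  have hdiv : 1 / (m:ℝ) ≤ ε / (1 - q) := by
    rw [div_le_div_iff₀ hm0 h1q]
    nlinarith
  calc a * Cm / ↑m * r ^ m = a * Cm * (1 / ↑m) * r ^ m := by ring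
    _ ≤ a * Cm * (ε / (1 - q)) * r ^ m := by
        gcongr
end
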